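/- arXiv:0708.4040 — 5 statements merged into one kernel-verified Lean document; each statement's English description precedes it below -/
import Mathlib

section
/- Let A be an n×m integer matrix all of whose entries are at most E ≥ 1 in absolute value, and let v ∈ ℝ^m satisfy ‖Av‖ ≤ δ. Then there exists v₀ ∈ ker(A) with ‖v − v₀‖ ≤ δ·(nm)^{n/2}·E^n. -/
/-!
Choose a maximal linearly independent family of rows of `A` and, among the columns of these
rows, a maximal linearly independent family. Both have the same size `r`, so they cut out an
invertible `r × r` submatrix `B`, and every row of `A` is a combination of the chosen rows. Hence
`v₀ := v - x`, where `x` is supported on the chosen columns and solves `B x = (A v)|_rows`, lies in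
`ker A`, and `‖v - v₀‖ = ‖x‖ ≤ ‖B⁻¹‖ δ`. Since `det B` is a nonzero integer, Cramer's rule bounds
the entries of `B⁻¹` by `r! Eʳ`, whence `‖B⁻¹‖ ≤ r · r! · Eʳ ≤ rʳ Eʳ ≤ (nm)^(n/2) Eⁿ`, because
`r ≤ n` and `r ≤ m`.
-/

open Function Submodule
open scoped Matrix.Norms.L2Operator Nat

theorem Nat.factorial_le_pow_pred : ∀ n : ℕ, n ! ≤ n ^ (n - 1)
  | 0 | 1 => le_rfl
  | n + 2 => calc
      (n + 2)! = (n + 2) * (n + 1)! := rfl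
      _ ≤ (n + 2) * (n + 1) ^ n := Nat.mul_le_mul_left _ (factorial_le_pow_pred (n + 1))
      _ ≤ (n + 2) * (n + 2) ^ n := Nat.mul_le_mul_left _ (Nat.pow_le_pow_left (by omega) _)
      _ = (n + 2) ^ (n + 1) := Nat.pow_succ'.symm

theorem Nat.mul_factorial_le_pow : ∀ n : ℕ, n * n ! ≤ n ^ n
  | 0 => zero_le _
  | n + 1 => by
    rw [pow_succ']
    exact Nat.mul_le_mul_left _ (factorial_le_pow_pred (n + 1))

theorem exists_fin_linearIndependent_span_eq {K V ι : Type*} [DivisionRing K] [AddCommGroup V]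
    [Module K V] [Finite ι] (v : ι → V) :
    ∃ (r : ℕ) (e : Fin r → ι), Injective e ∧
      span K (Set.range (v ∘ e)) = span K (Set.range v) ∧ LinearIndependent K (v ∘ e) := by
  obtain ⟨κ, a, ha, hspan, hli⟩ := exists_linearIndependent' K v
  have : Finite κ := Finite.of_injective a ha
  let σ := Finite.equivFin κ
  refine ⟨Nat.card κ, a ∘ σ.symm, ha.comp σ.symm.injective, ?_, hli.comp _ σ.symm.injective⟩
  rw [← comp_assoc, σ.symm.surjective.range_comp, hspan]

namespace Matrix

variable {K ι ι' κ : Type*}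

theorem exists_isUnit_submatrix_of_row_mem_span [Field K] [Fintype ι] [Fintype ι']
    (M : Matrix ι ι' K) :
    ∃ (r : ℕ) (e : Fin r → ι) (g : Fin r → ι'), Injective e ∧ Injective g ∧
      IsUnit (M.submatrix e g) ∧ ∀ i, M.row i ∈ span K (Set.range (M.row ∘ e)) := by
  obtain ⟨r, e, he, hrows, hli_rows⟩ := exists_fin_linearIndependent_span_eq (K := K) M.row
  set N := M.submatrix e id
  obtain ⟨s, g, hg, hcols, hli_cols⟩ := exists_fin_linearIndependent_span_eq (K := K) N.col
  have hrank : N.rank = r := (hli_rows.rank_matrix (M := N)).trans (Fintype.card_fin r)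
  have hs : s = r := by
    rw [← hrank, N.rank_eq_finrank_span_cols, ← hcols, finrank_span_eq_card hli_cols,
      Fintype.card_fin]
  subst hs
  refine ⟨s, e, g, he, hg, linearIndependent_cols_iff_isUnit.mp hli_cols, fun i => ?_⟩
  rw [hrows]
  exact subset_span ⟨i, rfl⟩

theorem mulVec_eq_zero_of_row_mem_span [CommSemiring K] [Fintype ι'] {M : Matrix ι ι' K}
    {e : κ → ι} (hrows : ∀ i, M.row i ∈ span K (Set.range (M.row ∘ e))) {w : ι' → K}
    (hw : M.submatrix e id *ᵥ w = 0) : M *ᵥ w = 0 := by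
  have hker : span K (Set.range (M.row ∘ e)) ≤ LinearMap.ker ((dotProductBilin K K).flip w) := by
    rw [span_le]
    rintro _ ⟨k, rfl⟩
    exact congrFun hw k
  funext i
  exact hker (hrows i)

theorem mulVec_extend_zero [NonUnitalNonAssocSemiring K] [Fintype ι'] [Fintype κ]
    (M : Matrix ι ι' K) {g : κ → ι'} (hg : Injective g) (x : κ → K) :
    M *ᵥ extend g x 0 = M.submatrix id g *ᵥ x := by
  funext i
  refine (Fintype.sum_of_injective g hg _ _ (fun j hj => ?_) fun k => ?_).symm
  · simp [extend_apply' _ _ _ (by simpa using hj)]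
  · simp [hg.extend_apply]

end Matrix

namespace EuclideanSpace

variable {𝕜 ι κ : Type*} [RCLike 𝕜] [Fintype ι] [Fintype κ]

theorem norm_equiv_symm_extend_zero {g : κ → ι} (hg : Injective g) (x : κ → 𝕜) :
    ‖(EuclideanSpace.equiv ι 𝕜).symm (extend g x 0)‖ = ‖(EuclideanSpace.equiv κ 𝕜).symm x‖ := by
  rw [EuclideanSpace.norm_eq, EuclideanSpace.norm_eq]
  congr 1
  refine (Fintype.sum_of_injective g hg _ _ (fun j hj => ?_) fun k => ?_).symm
  · simp [extend_apply' _ _ _ (by simpa using hj)]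
  · simp [hg.extend_apply]

theorem norm_equiv_symm_comp_le {e : κ → ι} (he : Injective e) (y : ι → 𝕜) :
    ‖(EuclideanSpace.equiv κ 𝕜).symm (y ∘ e)‖ ≤ ‖(EuclideanSpace.equiv ι 𝕜).symm y‖ := by
  rw [EuclideanSpace.norm_eq, EuclideanSpace.norm_eq]
  gcongr
  calc ∑ k, ‖y (e k)‖ ^ 2
      = ∑ i ∈ Finset.univ.map ⟨e, he⟩, ‖y i‖ ^ 2 := by rw [Finset.sum_map]; rfl
    _ ≤ ∑ i, ‖y i‖ ^ 2 := Finset.sum_le_univ_sum_of_nonneg fun _ => by positivity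

end EuclideanSpace

namespace Matrix

section L2OpNorm

variable {𝕜 ι ι' κ : Type*} [RCLike 𝕜] [Fintype ι] [Fintype ι'] [Fintype κ] [DecidableEq κ]

theorem l2_opNorm_le_of_norm_apply_le (N : Matrix ι κ 𝕜) {c : ℝ} (hc : 0 ≤ c)
    (hN : ∀ i j, ‖N i j‖ ≤ c) :
    ‖N‖ ≤ √(Fintype.card ι * Fintype.card κ) * c := by
  rw [l2_opNorm_def]
  refine ContinuousLinearMap.opNorm_le_bound _ (by positivity) fun x => ?_
  have hrow : ∀ i, ‖(N *ᵥ x) i‖ ^ 2 ≤ Fintype.card κ * c ^ 2 * ‖x‖ ^ 2 := fun i => calc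
    ‖(N *ᵥ x) i‖ ^ 2 ≤ (∑ j, c * ‖x j‖) ^ 2 := by
      gcongr
      refine (norm_sum_le _ _).trans (Finset.sum_le_sum fun j _ => ?_)
      rw [norm_mul]
      gcongr
      exact hN i j
    _ = c ^ 2 * (∑ j, ‖x j‖) ^ 2 := by rw [← Finset.mul_sum, mul_pow]
    _ ≤ c ^ 2 * (Fintype.card κ * ∑ j, ‖x j‖ ^ 2) := by
      gcongr
      exact sq_sum_le_card_mul_sum_sq
    _ = Fintype.card κ * c ^ 2 * ‖x‖ ^ 2 := by rw [EuclideanSpace.norm_sq_eq]; ring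
  refine (sq_le_sq₀ (by positivity) (by positivity)).mp ?_
  calc ‖_‖ ^ 2 = ∑ i, ‖(N *ᵥ x) i‖ ^ 2 := EuclideanSpace.norm_sq_eq _
    _ ≤ ∑ _i : ι, Fintype.card κ * c ^ 2 * ‖x‖ ^ 2 := Finset.sum_le_sum fun i _ => hrow i
    _ = (√(Fintype.card ι * Fintype.card κ) * c * ‖x‖) ^ 2 := by
      rw [Finset.sum_const, Finset.card_univ, nsmul_eq_mul, mul_pow, mul_pow,
        Real.sq_sqrt (by positivity)]
      ring

theorem exists_mulVec_eq_zero_norm_sub_le {M : Matrix ι ι' 𝕜} {e : κ → ι} {g : κ → ι'}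
    (he : Injective e) (hg : Injective g) (hB : IsUnit (M.submatrix e g))
    (hrows : ∀ i, M.row i ∈ span 𝕜 (Set.range (M.row ∘ e))) (v : EuclideanSpace 𝕜 ι') :
    ∃ v₀ : EuclideanSpace 𝕜 ι', M *ᵥ EuclideanSpace.equiv ι' 𝕜 v₀ = 0 ∧
      ‖v - v₀‖ ≤ ‖(M.submatrix e g)⁻¹‖ *
        ‖(EuclideanSpace.equiv ι 𝕜).symm (M *ᵥ EuclideanSpace.equiv ι' 𝕜 v)‖ := by
  set u := (M *ᵥ EuclideanSpace.equiv ι' 𝕜 v) ∘ e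
  set x := (M.submatrix e g)⁻¹ *ᵥ u
  refine ⟨v - (EuclideanSpace.equiv ι' 𝕜).symm (extend g x 0), ?_, ?_⟩
  · refine mulVec_eq_zero_of_row_mem_span hrows ?_
    have hx : M.submatrix e g *ᵥ x = u := by
      rw [mulVec_mulVec, mul_nonsing_inv _ ((isUnit_iff_isUnit_det _).mp hB), one_mulVec]
    rw [map_sub, ContinuousLinearEquiv.apply_symm_apply, mulVec_sub, mulVec_extend_zero _ hg]
    exact sub_eq_zero.mpr hx.symm
  · rw [sub_sub_cancel, EuclideanSpace.norm_equiv_symm_extend_zero hg]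
    calc ‖(EuclideanSpace.equiv κ 𝕜).symm x‖
        ≤ ‖(M.submatrix e g)⁻¹‖ * ‖(EuclideanSpace.equiv κ 𝕜).symm u‖ :=
          l2_opNorm_mulVec _ ((EuclideanSpace.equiv κ 𝕜).symm u)
      _ ≤ _ := by gcongr; exact EuclideanSpace.norm_equiv_symm_comp_le he _

end L2OpNorm

section IntegerInverse

variable {κ : Type*} [Fintype κ] [DecidableEq κ]

theorem abs_adjugate_apply_le {R : Type*} [CommRing R] [LinearOrder R] [IsStrictOrderedRing R]
    {B : Matrix κ κ R} {E : R} (hE : 1 ≤ E) (hB : ∀ i j, |B i j| ≤ E) (k l : κ) :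
    |adjugate B k l| ≤ (Fintype.card κ)! * E ^ Fintype.card κ := by
  -- `adjugate B k l` is the determinant of `B` with row `l` replaced by the unit vector at `k`.
  have hupd : ∀ i j, |B.updateRow l (Pi.single k 1) i j| ≤ E := by
    intro i j
    rcases eq_or_ne i l with rfl | hi
    · rw [updateRow_self]
      rcases eq_or_ne j k with rfl | hj
      · simpa using hE
      · simpa [Pi.single_eq_of_ne hj] using zero_le_one.trans hE
    · rw [updateRow_ne hi]
      exact hB i j
  rw [adjugate_apply, ← nsmul_eq_mul]
  exact det_le (abv := AbsoluteValue.abs) hupd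

theorem abs_inv_apply_le_abs_adjugate_apply {F : Type*} [Field F] [LinearOrder F]
    [IsStrictOrderedRing F] {B : Matrix κ κ F} (hB : 1 ≤ |B.det|) (k l : κ) :
    |B⁻¹ k l| ≤ |adjugate B k l| := by
  rw [inv_def, smul_apply, smul_eq_mul, Ring.inverse_eq_inv', abs_mul, abs_inv]
  exact mul_le_of_le_one_left (abs_nonneg _) (inv_le_one_of_one_le₀ hB)

theorem abs_inv_map_intCast_apply_le {F : Type*} [Field F] [LinearOrder F]
    [IsStrictOrderedRing F] {A : Matrix κ κ ℤ} {E : ℤ} (hE : 1 ≤ E) (hA : ∀ i j, |A i j| ≤ E)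
    (hdet : A.det ≠ 0) (k l : κ) :
    |(A.map (Int.cast : ℤ → F))⁻¹ k l| ≤ (Fintype.card κ)! * (E : F) ^ Fintype.card κ := by
  have hdet' : 1 ≤ |(A.map (Int.cast : ℤ → F)).det| := by
    rw [← Int.cast_det, ← Int.cast_abs]
    exact_mod_cast Int.one_le_abs hdet
  refine (abs_inv_apply_le_abs_adjugate_apply hdet' k l).trans (abs_adjugate_apply_le ?_ ?_ k l)
  · exact_mod_cast hE
  · intro i j
    rw [map_apply, ← Int.cast_abs]
    exact_mod_cast hA i j

theorem l2_opNorm_inv_map_intCast_le {A : Matrix κ κ ℤ} {E : ℤ} (hE : 1 ≤ E)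
    (hA : ∀ i j, |A i j| ≤ E) (hdet : A.det ≠ 0) :
    ‖(A.map (Int.cast : ℤ → ℝ))⁻¹‖ ≤
      Fintype.card κ * ((Fintype.card κ)! * (E : ℝ) ^ Fintype.card κ) := by
  have hE₀ : (0 : ℝ) ≤ E := by exact_mod_cast zero_le_one.trans hE
  refine (l2_opNorm_le_of_norm_apply_le _ (by positivity) fun k l =>
    (Real.norm_eq_abs _).trans_le (abs_inv_map_intCast_apply_le hE hA hdet k l)).trans_eq ?_
  rw [Real.sqrt_mul_self (Nat.cast_nonneg _)]

end IntegerInverse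

end Matrix

theorem natCast_mul_factorial_mul_pow_le {r n m : ℕ} {E : ℝ} (hrn : r ≤ n) (hrm : r ≤ m)
    (hE : 1 ≤ E) : (r : ℝ) * (r ! * E ^ r) ≤ (n * m : ℝ) ^ ((n : ℝ) / 2) * E ^ n := by
  rcases r.eq_zero_or_pos with rfl | hr
  · simp only [CharP.cast_eq_zero, zero_mul]
    positivity
  have hrr : (r : ℝ) ^ 2 ≤ n * m := by
    rw [sq]; exact_mod_cast Nat.mul_le_mul hrn hrm
  have hnm : (1 : ℝ) ≤ n * m := by
    refine le_trans ?_ hrr; exact_mod_cast Nat.one_le_pow _ _ hr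
  have hfac : (r : ℝ) * r ! ≤ (r : ℝ) ^ r := by exact_mod_cast Nat.mul_factorial_le_pow r
  have hpow : (r : ℝ) ^ r ≤ (n * m : ℝ) ^ ((n : ℝ) / 2) := calc
    (r : ℝ) ^ r = ((r : ℝ) ^ 2) ^ ((r : ℝ) / 2) := by
      rw [← Real.rpow_two, ← Real.rpow_mul (by positivity), ← Real.rpow_natCast]
      ring_nf
    _ ≤ (n * m : ℝ) ^ ((r : ℝ) / 2) := by gcongr
    _ ≤ (n * m : ℝ) ^ ((n : ℝ) / 2) := by gcongr
  calc (r : ℝ) * (r ! * E ^ r) = (r * r !) * E ^ r := by ring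
    _ ≤ (n * m : ℝ) ^ ((n : ℝ) / 2) * E ^ n :=
      mul_le_mul (hfac.trans hpow) (pow_le_pow_right₀ hE hrn) (by positivity) (by positivity)

/-- If `A` is an `n × m` integer matrix with entries bounded by `E ≥ 1`
and `v ∈ ℝ^m` satisfies `‖Av‖ ≤ δ`, then there is `v₀ ∈ ker A` with
`‖v - v₀‖ ≤ δ · (nm)^{n/2} · E^n`. -/
theorem stmt0 (n m : ℕ) (A : Matrix (Fin n) (Fin m) ℤ) (E : ℤ) (hE : 1 ≤ E)
    (hA : ∀ i j, |A i j| ≤ E) (v : EuclideanSpace ℝ (Fin m)) (δ : ℝ)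
    (hv : ‖(EuclideanSpace.equiv (Fin n) ℝ).symm
        ((A.map (Int.cast : ℤ → ℝ)).mulVec (EuclideanSpace.equiv (Fin m) ℝ v))‖ ≤ δ) :
    ∃ v₀ : EuclideanSpace ℝ (Fin m),
      (A.map (Int.cast : ℤ → ℝ)).mulVec (EuclideanSpace.equiv (Fin m) ℝ v₀) = 0 ∧
      ‖v - v₀‖ ≤ δ * ((n * m : ℝ) ^ ((n : ℝ) / 2)) * (E : ℝ) ^ n := by
  obtain ⟨r, e, g, he, hg, hB, hrows⟩ :=
    (A.map (Int.cast : ℤ → ℝ)).exists_isUnit_submatrix_of_row_mem_span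
  obtain ⟨v₀, hker, hdist⟩ := Matrix.exists_mulVec_eq_zero_norm_sub_le he hg hB hrows v
  rw [Matrix.submatrix_map] at hB hdist
  have hdet : (A.submatrix e g).det ≠ 0 := by
    rw [Matrix.isUnit_iff_isUnit_det, ← Int.cast_det] at hB
    exact_mod_cast hB.ne_zero
  have hinv := Matrix.l2_opNorm_inv_map_intCast_le hE (fun i j => hA (e i) (g j)) hdet
  rw [Fintype.card_fin] at hinv
  have hbound : ‖((A.submatrix e g).map (Int.cast : ℤ → ℝ))⁻¹‖ ≤
      (n * m : ℝ) ^ ((n : ℝ) / 2) * (E : ℝ) ^ n := hinv.trans <|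
    natCast_mul_factorial_mul_pow_le (by simpa using Fintype.card_le_of_injective e he)
      (by simpa using Fintype.card_le_of_injective g hg) (by exact_mod_cast hE)
  refine ⟨v₀, hker, hdist.trans ?_⟩
  calc _ ≤ (n * m : ℝ) ^ ((n : ℝ) / 2) * (E : ℝ) ^ n * δ :=
        mul_le_mul hbound hv (norm_nonneg _) ((norm_nonneg _).trans hbound)
    _ = _ := by ring
end

section
/- Every nonzero eigenvalue of A·Aᵀ, where A is an n×m integer matrix with all entries bounded in absolute value by E ≥ 1, has absolute value at least (nmE²)^{-n}. -/
/-!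
The characteristic polynomial of `M = A * Aᵀ` has integer coefficients and splits as
`∏ i, (X - λᵢ)` over the real eigenvalues of the symmetric matrix `M`. Its coefficient of index
`#{i | λᵢ = 0}` is `±∏_{λᵢ ≠ 0} λᵢ`, a nonzero integer, so the nonzero eigenvalues have product at
least `1` in absolute value. By Gershgorin every eigenvalue is bounded by `n * (m * E²)`, since the
entries of `M` are bounded by `m * E²`; dividing out the other nonzero eigenvalues gives the bound
for `μ`.
-/

open Polynomial Matrix Finset

theorem Matrix.norm_le_card_mul_of_mem_spectrum {K ι : Type*} [NormedField K] [Fintype ι]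
    [DecidableEq ι] {A : Matrix ι ι K} {C : ℝ} (hA : ∀ i j, ‖A i j‖ ≤ C) {μ : K}
    (hμ : μ ∈ spectrum K A) : ‖μ‖ ≤ Fintype.card ι * C := by
  rw [← spectrum_toLin', ← Module.End.hasEigenvalue_iff_mem_spectrum] at hμ
  obtain ⟨k, hk⟩ := eigenvalue_mem_ball hμ
  rw [Metric.mem_closedBall, dist_eq_norm] at hk
  calc ‖μ‖ ≤ ‖A k k‖ + ‖μ - A k k‖ := norm_le_norm_add_norm_sub' _ _
    _ ≤ ∑ j, ‖A k j‖ := by rw [← add_sum_erase _ _ (mem_univ k)]; gcongr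
    _ ≤ ∑ _j : ι, C := sum_le_sum fun j _ => hA k j
    _ = Fintype.card ι * C := by simp

theorem Matrix.abs_mul_apply_le {R ι κ ν : Type*} [CommRing R] [LinearOrder R]
    [IsStrictOrderedRing R] [Fintype κ] {A : Matrix ι κ R} {B : Matrix κ ν R} {a b : R}
    (hA : ∀ i k, |A i k| ≤ a) (hB : ∀ k j, |B k j| ≤ b) (i : ι) (j : ν) :
    |(A * B) i j| ≤ Fintype.card κ * (a * b) := by
  calc |(A * B) i j| ≤ ∑ k, |A i k| * |B k j| := by
        simp_rw [mul_apply, ← abs_mul]; exact abs_sum_le_sum_abs _ _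
    _ ≤ ∑ _k : κ, a * b := sum_le_sum fun k _ =>
        mul_le_mul (hA i k) (hB k j) (abs_nonneg _) ((abs_nonneg _).trans (hA i k))
    _ = Fintype.card κ * (a * b) := by simp

theorem Polynomial.coeff_prod_X_sub_C_card_filter_eq_zero {R ι : Type*} [CommRing R]
    [DecidableEq R] (s : Finset ι) (f : ι → R) :
    (∏ i ∈ s, (X - C (f i))).coeff #{i ∈ s | f i = 0} = ∏ i ∈ s with f i ≠ 0, -f i := by
  rw [← prod_filter_mul_prod_filter_not s (fun i => f i = 0),
    prod_congr rfl fun i hi => by rw [(mem_filter.mp hi).2, C_0, sub_zero], prod_const,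
    coeff_X_pow_mul', if_pos le_rfl, Nat.sub_self, coeff_zero_eq_eval_zero, eval_prod]
  simp

theorem Matrix.IsHermitian.one_le_prod_abs_nonzero_eigenvalues_of_int {ι : Type*} [Fintype ι]
    [DecidableEq ι] {A : Matrix ι ι ℤ} (hA : (A.map (Int.cast : ℤ → ℝ)).IsHermitian) :
    1 ≤ ∏ i with hA.eigenvalues i ≠ 0, |hA.eigenvalues i| := by
  set k := #{i | hA.eigenvalues i = 0}
  have hcoeff :
      (A.charpoly.coeff k : ℝ) = ∏ i with hA.eigenvalues i ≠ 0, -hA.eigenvalues i := by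
    rw [← coeff_prod_X_sub_C_card_filter_eq_zero]
    have := charpoly_map A (Int.castRingHom ℝ)
    rw [Int.coe_castRingHom, hA.charpoly_eq] at this
    simpa using congrArg (coeff · k) this.symm
  have hne : A.charpoly.coeff k ≠ 0 := by
    intro h0
    rw [h0, Int.cast_zero, eq_comm, prod_eq_zero_iff] at hcoeff
    obtain ⟨i, hi, hzero⟩ := hcoeff
    exact (mem_filter.mp hi).2 (neg_eq_zero.mp hzero)
  calc (1 : ℝ) ≤ |(A.charpoly.coeff k : ℝ)| := by exact_mod_cast Int.one_le_abs hne
    _ = _ := by simp [hcoeff, abs_prod]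

theorem Matrix.IsHermitian.inv_pow_card_le_abs_of_int {ι : Type*} [Fintype ι]
    [DecidableEq ι] {A : Matrix ι ι ℤ} (hA : (A.map (Int.cast : ℤ → ℝ)).IsHermitian) {B : ℝ}
    (hB : ∀ i, |hA.eigenvalues i| ≤ B) {μ : ℝ} (hμ : μ ≠ 0)
    (hμA : μ ∈ spectrum ℝ (A.map (Int.cast : ℤ → ℝ))) :
    (B ^ Fintype.card ι)⁻¹ ≤ |μ| := by
  rw [hA.spectrum_real_eq_range_eigenvalues] at hμA
  obtain ⟨i₀, rfl⟩ := hμA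
  set N : Finset ι := {i | hA.eigenvalues i ≠ 0}
  have hi₀ : i₀ ∈ N := mem_filter.mpr ⟨mem_univ _, hμ⟩
  have hprod := hA.one_le_prod_abs_nonzero_eigenvalues_of_int
  have hprod_le (s : Finset ι) : ∏ i ∈ s, |hA.eigenvalues i| ≤ B ^ #s :=
    (prod_le_prod (fun _ _ => abs_nonneg _) fun i _ => hB i).trans_eq (prod_const B)
  -- `B ≥ 1` is forced, as at least one eigenvalue is nonzero and their product is at least `1`.
  have hB₁ : 1 ≤ B :=
    (one_le_pow_iff_of_nonneg ((abs_nonneg _).trans (hB i₀)) (card_ne_zero_of_mem hi₀)).mp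
      (hprod.trans (hprod_le N))
  rw [inv_le_iff_one_le_mul₀ (pow_pos (zero_lt_one.trans_le hB₁) _)]
  calc 1 ≤ ∏ i ∈ N, |hA.eigenvalues i| := hprod
    _ = |hA.eigenvalues i₀| * ∏ i ∈ N.erase i₀, |hA.eigenvalues i| :=
        (mul_prod_erase _ _ hi₀).symm
    _ ≤ |hA.eigenvalues i₀| * B ^ Fintype.card ι := by
        gcongr
        exact (hprod_le _).trans (pow_le_pow_right₀ hB₁ (card_le_univ _))

theorem stmt1_general (n m : ℕ) (A : Matrix (Fin n) (Fin m) ℤ) (E : ℤ)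
    (hA : ∀ i j, |A i j| ≤ E) (μ : ℝ) (hμ : μ ≠ 0)
    (h : ∃ x : Fin n → ℝ, x ≠ 0 ∧
      ((A.map (Int.cast : ℤ → ℝ)) * (A.map (Int.cast : ℤ → ℝ)).transpose).mulVec x = μ • x) :
    ((n * m : ℝ) * (E : ℝ) ^ 2) ^ (-(n : ℤ)) ≤ |μ| := by
  obtain ⟨x, hx₀, hx⟩ := h
  have hAA : (A.map (Int.cast : ℤ → ℝ)) * (A.map (Int.cast : ℤ → ℝ)).transpose =
      (A * Aᵀ).map (Int.cast : ℤ → ℝ) := by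
    ext i j
    simp [mul_apply]
  have hentries (i j : Fin n) : ‖(A * Aᵀ).map (Int.cast : ℤ → ℝ) i j‖ ≤ m * (E * E) := by
    have hAE (i : Fin n) (k : Fin m) : |A.map (Int.cast : ℤ → ℝ) i k| ≤ E := by
      rw [map_apply]; exact_mod_cast hA i k
    have := abs_mul_apply_le (B := (A.map (Int.cast : ℤ → ℝ))ᵀ) hAE (fun k j => hAE j k) i j
    rwa [Fintype.card_fin, hAA, ← Real.norm_eq_abs] at this
  rw [hAA] at hx
  have hH : ((A * Aᵀ).map (Int.cast : ℤ → ℝ)).IsHermitian := by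
    rw [← hAA, ← conjTranspose_eq_transpose_of_trivial]
    exact isHermitian_mul_conjTranspose_self _
  have hμ_spec : μ ∈ spectrum ℝ ((A * Aᵀ).map (Int.cast : ℤ → ℝ)) := by
    rw [← spectrum_toLin']
    exact (Module.End.hasEigenvalue_of_hasEigenvector
      ⟨Module.End.mem_eigenspace_iff.mpr (by simpa using hx), hx₀⟩).mem_spectrum
  have heig (i : Fin n) : |hH.eigenvalues i| ≤ (n * m : ℝ) * (E : ℝ) ^ 2 := by
    simpa [pow_two, mul_assoc] using
      norm_le_card_mul_of_mem_spectrum hentries (hH.eigenvalues_mem_spectrum_real i)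
  rw [_root_.zpow_neg, zpow_natCast]
  simpa using hH.inv_pow_card_le_abs_of_int heig hμ hμ_spec

/-- every nonzero eigenvalue of `A·Aᵀ`, where `A` is an `n × m` integer
matrix with entries bounded by `E ≥ 1`, has absolute value at least `(nmE²)^{-n}`. -/
theorem stmt1 (n m : ℕ) (A : Matrix (Fin n) (Fin m) ℤ) (E : ℤ) (hE : 1 ≤ E)
    (hA : ∀ i j, |A i j| ≤ E) (μ : ℝ) (hμ : μ ≠ 0)
    (h : ∃ x : Fin n → ℝ, x ≠ 0 ∧
      ((A.map (Int.cast : ℤ → ℝ)) * (A.map (Int.cast : ℤ → ℝ)).transpose).mulVec x = μ • x) :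
    ((n * m : ℝ) * (E : ℝ) ^ 2) ^ (-(n : ℤ)) ≤ |μ| :=
  stmt1_general n m A E hA μ hμ h
end

section
/- Let f : V → W be a linear map between finite-dimensional real inner product spaces, δ > 0, and W[δ] the span of left singular vectors with singular value ≥ δ (as above). If V₁ ⊆ V is a subspace such that ‖f(v)‖ ≥ δ‖v‖ for all v ∈ V₁, then dim W[δ] ≥ dim V₁. -/
/-!
Expand `x = ∑ cᵢ vᵢ` in the right singular basis. Since the images `f vᵢ` are pairwise
orthogonal, `δ²‖x‖² - ‖f x‖² = ∑ cᵢ² (δ² - ‖f vᵢ‖²)`. If `x ∈ V₁` has `cᵢ = 0` whenever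
`‖f vᵢ‖ ≥ δ`, every term of this sum is nonnegative while the sum is `≤ 0`, so `x = 0`.
Hence the coordinates indexed by `{i | ‖f vᵢ‖ ≥ δ}` embed `V₁`, and the corresponding `wᵢ`
are orthonormal vectors of `W[δ]`.
-/

open scoped RealInnerProductSpace
open Module

section

variable {ι E F : Type*} [Fintype ι] [NormedAddCommGroup E] [InnerProductSpace ℝ E]
  [NormedAddCommGroup F] [InnerProductSpace ℝ F]

theorem norm_sum_smul_sq_of_pairwise_inner_eq_zero {u : ι → E}
    (hu : Pairwise fun i j => ⟪u i, u j⟫ = 0) (c : ι → ℝ) :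
    ‖∑ i, c i • u i‖ ^ 2 = ∑ i, c i ^ 2 * ‖u i‖ ^ 2 := by
  rw [← real_inner_self_eq_norm_sq, sum_inner]
  refine Finset.sum_congr rfl fun i _ => ?_
  rw [inner_sum, Finset.sum_eq_single i (fun j _ hji => by
    rw [real_inner_smul_left, real_inner_smul_right, hu hji.symm, mul_zero, mul_zero])
    (by simp)]
  rw [real_inner_smul_left, real_inner_smul_right, real_inner_self_eq_norm_sq]
  ring

theorem OrthonormalBasis.norm_apply_sq_of_pairwise_inner_eq_zero (b : OrthonormalBasis ι ℝ E)
    (f : E →ₗ[ℝ] F) (hf : Pairwise fun i j => ⟪f (b i), f (b j)⟫ = 0) (x : E) :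
    ‖f x‖ ^ 2 = ∑ i, ⟪b i, x⟫ ^ 2 * ‖f (b i)‖ ^ 2 := by
  conv_lhs => rw [← b.sum_repr' x, map_sum]
  simp only [map_smul]
  exact norm_sum_smul_sq_of_pairwise_inner_eq_zero hf _

variable (b : OrthonormalBasis ι ℝ E) (f : E →ₗ[ℝ] F)
  (hf : Pairwise fun i j => ⟪f (b i), f (b j)⟫ = 0) {δ : ℝ}
include hf

theorem OrthonormalBasis.eq_zero_of_le_norm_apply (hδ : 0 ≤ δ) {x : E}
    (hx : δ * ‖x‖ ≤ ‖f x‖) (hcoord : ∀ i, δ ≤ ‖f (b i)‖ → ⟪b i, x⟫ = 0) : x = 0 := by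
  have hcases : ∀ i, ⟪b i, x⟫ = 0 ∨ ‖f (b i)‖ ^ 2 < δ ^ 2 := fun i =>
    (le_or_gt δ ‖f (b i)‖).imp (hcoord i) fun h => pow_lt_pow_left₀ h (norm_nonneg _) two_ne_zero
  have hterm : ∀ i ∈ Finset.univ, 0 ≤ ⟪b i, x⟫ ^ 2 * (δ ^ 2 - ‖f (b i)‖ ^ 2) := fun i _ => by
    rcases hcases i with h | h
    · simp [h]
    · exact mul_nonneg (sq_nonneg _) (sub_nonneg.2 h.le)
  have hsum : ∑ i, ⟪b i, x⟫ ^ 2 * (δ ^ 2 - ‖f (b i)‖ ^ 2) ≤ 0 := by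
    have hsq : (δ * ‖x‖) ^ 2 ≤ ‖f x‖ ^ 2 := pow_le_pow_left₀ (by positivity) hx 2
    rw [mul_pow, ← b.sum_sq_inner_right x, b.norm_apply_sq_of_pairwise_inner_eq_zero f hf] at hsq
    simp only [mul_sub, Finset.sum_sub_distrib, ← Finset.sum_mul]
    linarith
  have hzero := (Finset.sum_eq_zero_iff_of_nonneg hterm).1 (le_antisymm hsum
    (Finset.sum_nonneg hterm))
  have hcoord_zero : ∀ i, ⟪b i, x⟫ = 0 := fun i =>
    (hcases i).elim id fun h => pow_eq_zero_iff two_ne_zero |>.1 <|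
      (mul_eq_zero.1 (hzero i (Finset.mem_univ i))).resolve_right (sub_ne_zero.2 h.ne')
  rw [← norm_eq_zero, ← sq_eq_zero_iff, ← b.sum_sq_inner_right x]
  simp [hcoord_zero]

theorem OrthonormalBasis.finrank_le_card_of_le_norm_apply (hδ : 0 ≤ δ) (V₁ : Submodule ℝ E)
    (hV₁ : ∀ x ∈ V₁, δ * ‖x‖ ≤ ‖f x‖) :
    finrank ℝ V₁ ≤ Fintype.card {i // δ ≤ ‖f (b i)‖} := by
  let coords : E →ₗ[ℝ] ({i // δ ≤ ‖f (b i)‖} → ℝ) :=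
    LinearMap.pi fun i => (innerSL ℝ (b i)).toLinearMap
  have hinj : Function.Injective (coords ∘ₗ V₁.subtype) := by
    rw [← LinearMap.ker_eq_bot, LinearMap.ker_eq_bot']
    rintro ⟨x, hx⟩ hcx
    exact Subtype.ext <| b.eq_zero_of_le_norm_apply f hf hδ (hV₁ x hx) fun i hi =>
      congrFun hcx ⟨i, hi⟩
  simpa using LinearMap.finrank_le_finrank_of_injective hinj

end

theorem Orthonormal.card_le_finrank_span {ι E : Type*} [Fintype ι] [NormedAddCommGroup E]
    [InnerProductSpace ℝ E] [FiniteDimensional ℝ E] {u : ι → E} (hu : Orthonormal ℝ u) {s : Set E}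
    (hs : Set.range u ⊆ s) : Fintype.card ι ≤ finrank ℝ (Submodule.span ℝ s) :=
  (finrank_span_eq_card hu.linearIndependent).ge.trans (Submodule.finrank_mono
    (Submodule.span_mono hs))

/-- with a singular value decomposition `f (v i) = σ i • w i` as in the
context, if `V₁` is a subspace with `‖f x‖ ≥ δ‖x‖` for all `x ∈ V₁`, then the span
`W[δ]` of the left singular vectors with singular value `≥ δ` has dimension
at least `dim V₁`. -/
theorem stmt4 {V W : Type*} [NormedAddCommGroup V] [InnerProductSpace ℝ V]
    [FiniteDimensional ℝ V] [NormedAddCommGroup W] [InnerProductSpace ℝ W]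
    [FiniteDimensional ℝ W]
    (f : V →ₗ[ℝ] W) {m : ℕ} (v : Fin m → V) (w : Fin m → W) (σ : Fin m → ℝ)
    (hv : Orthonormal ℝ v) (hvb : Submodule.span ℝ (Set.range v) = ⊤)
    (hw : ∀ i j, i ≠ j → ⟪w i, w j⟫ = (0 : ℝ))
    (hwn : ∀ i, ‖w i‖ = 1 ∨ w i = 0)
    (hσ : ∀ i, 0 ≤ σ i)
    (hf : ∀ i, f (v i) = σ i • w i)
    (δ : ℝ) (hδ : 0 < δ)
    (V₁ : Submodule ℝ V) (hV₁ : ∀ x ∈ V₁, δ * ‖x‖ ≤ ‖f x‖) :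
    Module.finrank ℝ V₁ ≤
      Module.finrank ℝ (Submodule.span ℝ {y | ∃ i, δ ≤ σ i ∧ y = w i}) := by
  set b := OrthonormalBasis.mk hv hvb.ge
  have hb : ∀ i, b i = v i := fun i => by simp [b]
  have horth : Pairwise fun i j => ⟪f (b i), f (b j)⟫ = 0 := fun i j hij => by
    simp [hb, hf, real_inner_smul_left, real_inner_smul_right, hw i j hij]
  have hlarge : ∀ i, δ ≤ ‖f (b i)‖ → δ ≤ σ i ∧ ‖w i‖ = 1 := fun i hi => by
    rw [hb, hf, norm_smul, Real.norm_of_nonneg (hσ i)] at hi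
    rcases hwn i with h | h
    · exact ⟨by simpa [h] using hi, h⟩
    · exact absurd hi (by simpa [h] using hδ)
  have hw_large : Orthonormal ℝ fun i : {i // δ ≤ ‖f (b i)‖} => w i :=
    ⟨fun i => (hlarge i i.2).2, fun i j hij => hw i j (Subtype.coe_injective.ne hij)⟩
  calc finrank ℝ V₁ ≤ Fintype.card {i // δ ≤ ‖f (b i)‖} :=
        b.finrank_le_card_of_le_norm_apply f horth hδ.le V₁ hV₁
    _ ≤ _ := hw_large.card_le_finrank_span (by
        rintro _ ⟨i, rfl⟩
        exact ⟨i, (hlarge i i.2).1, rfl⟩)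
end

section
/- Let V be a finite-dimensional real inner product space and U₁, U₂ ⊆ V subspaces of equal dimension r. Suppose there is an orthonormal basis u₁,…,u_r of U₁ such that dist(u_i, U₂) ≤ ε for all i, with ε sufficiently small (depending only on dim V). Then there exists a constant C, depending only on dim V, and orthonormal bases u'₁,…,u'_r of U₁ and v₁,…,v_r of U₂ with ‖u'_i − v_i‖ ≤ C·ε for all i. -/
/-!
Let `P` be the orthogonal projection onto `U₂`. An orthonormal eigenbasis `a` of `T†T`, where
`T = P|U₁ : U₁ → U₂`, has pairwise orthogonal images `P aᵢ`. The sum `∑ dist(xᵢ, U₂)²` over an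
orthonormal basis `x` of `U₁` is the trace of `Q†Q` for `Q = (1 - P)|U₁`, hence basis independent,
so it is at most `r ε²` for `a` as it is for `u`. If this is `< 1`, no `P aᵢ` vanishes, and the
unit vectors `vᵢ = P aᵢ / ‖P aᵢ‖` are orthonormal with `‖aᵢ - vᵢ‖² ≤ 2 dist(aᵢ, U₂)²`.
With `ε ≤ 1 / (n + 1)` this gives `C = n + 1`.
-/

open Module Metric

open scoped InnerProductSpace

section TraceForm

variable {𝕜 E F : Type*} [RCLike 𝕜]
  [NormedAddCommGroup E] [InnerProductSpace 𝕜 E] [FiniteDimensional 𝕜 E]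
  [NormedAddCommGroup F] [InnerProductSpace 𝕜 F] [FiniteDimensional 𝕜 F]

lemma LinearMap.trace_adjoint_comp_self_eq_sum_norm_sq {ι : Type*} [Fintype ι]
    (T : E →ₗ[𝕜] F) (e : OrthonormalBasis ι 𝕜 E) :
    (adjoint T ∘ₗ T).trace 𝕜 E = ((∑ i, ‖T (e i)‖ ^ 2 : ℝ) : 𝕜) := by
  rw [LinearMap.trace_eq_sum_inner _ e]
  push_cast
  refine Finset.sum_congr rfl fun i _ => ?_
  rw [Function.comp_apply, LinearMap.adjoint_inner_right, inner_self_eq_norm_sq_to_K]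

lemma LinearMap.sum_norm_sq_apply_orthonormalBasis_eq {ι κ : Type*} [Fintype ι] [Fintype κ]
    (T : E →ₗ[𝕜] F) (e : OrthonormalBasis ι 𝕜 E) (e' : OrthonormalBasis κ 𝕜 E) :
    ∑ i, ‖T (e i)‖ ^ 2 = ∑ j, ‖T (e' j)‖ ^ 2 := by
  exact_mod_cast (T.trace_adjoint_comp_self_eq_sum_norm_sq e).symm.trans
    (T.trace_adjoint_comp_self_eq_sum_norm_sq e')

lemma LinearMap.exists_orthonormalBasis_pairwise_inner_apply_eq_zero {n : ℕ}
    (T : E →ₗ[𝕜] F) (hn : finrank 𝕜 E = n) :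
    ∃ e : OrthonormalBasis (Fin n) 𝕜 E, Pairwise fun i j => ⟪T (e i), T (e j)⟫_𝕜 = 0 := by
  have hS := LinearMap.isSymmetric_adjoint_comp_self T
  refine ⟨hS.eigenvectorBasis hn, fun i j hij => ?_⟩
  dsimp only
  rw [← LinearMap.adjoint_inner_right, ← LinearMap.comp_apply, hS.apply_eigenvectorBasis,
    inner_smul_right, (hS.eigenvectorBasis hn).orthonormal.2 hij, mul_zero]

end TraceForm

section Orthonormal

variable {𝕜 E : Type*} [RCLike 𝕜] [NormedAddCommGroup E] [InnerProductSpace 𝕜 E]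

lemma orthonormal_inv_norm_smul_of_pairwise_inner_eq_zero {ι : Type*} {w : ι → E}
    (hw : Pairwise fun i j => ⟪w i, w j⟫_𝕜 = 0) (hw₀ : ∀ i, w i ≠ 0) :
    Orthonormal 𝕜 fun i => (‖w i‖⁻¹ : 𝕜) • w i :=
  ⟨fun i => norm_smul_inv_norm (hw₀ i), fun i j hij => by
    simp [inner_smul_left, inner_smul_right, hw hij]⟩

lemma Submodule.exists_orthonormalBasis_coe_eq {K : Submodule 𝕜 E} [FiniteDimensional 𝕜 K]
    {n : ℕ} {u : Fin n → E} (hu : Orthonormal 𝕜 u) (huK : ∀ i, u i ∈ K) (hn : finrank 𝕜 K = n) :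
    ∃ b : OrthonormalBasis (Fin n) 𝕜 K, ∀ i, (b i : E) = u i := by
  have hon := hu.codRestrict K huK
  have hsp := hon.linearIndependent.span_eq_top_of_card_eq_finrank' (by simp [hn])
  exact ⟨OrthonormalBasis.mk hon hsp.ge, fun i => by simp⟩

end Orthonormal

section Projection

variable {V : Type*} [NormedAddCommGroup V] [InnerProductSpace ℝ V]

lemma Submodule.norm_sub_starProjection_eq_infDist (K : Submodule ℝ V) [K.HasOrthogonalProjection]
    (x : V) : ‖x - K.starProjection x‖ = infDist x K := by
  simp_rw [starProjection_minimal, infDist_eq_iInf, dist_eq_norm]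
  rfl

lemma Submodule.norm_sub_inv_norm_smul_starProjection_sq_le (K : Submodule ℝ V)
    [K.HasOrthogonalProjection] {x : V} (hx : ‖x‖ = 1) :
    ‖x - ‖K.starProjection x‖⁻¹ • K.starProjection x‖ ^ 2 ≤ 2 * ‖x - K.starProjection x‖ ^ 2 := by
  set p := K.starProjection x
  have hxp : ⟪x, p⟫_ℝ = ‖p‖ ^ 2 := by
    rw [← real_inner_self_eq_norm_sq, ← add_zero ⟪p, p⟫_ℝ,
      ← K.starProjection_inner_eq_zero x p (K.starProjection_apply_mem x), ← inner_add_left,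
      add_sub_cancel]
  have hdist : ‖x - p‖ ^ 2 = 1 - ‖p‖ ^ 2 := by
    rw [norm_sub_sq_real, hx, hxp]; ring
  rcases eq_or_ne p 0 with hp | hp
  · simp [hp, hx]
  have hp₀ : 0 < ‖p‖ := norm_pos_iff.mpr hp
  have hp₁ : ‖p‖ ≤ 1 := by nlinarith [sq_nonneg ‖x - p‖]
  rw [hdist, norm_sub_sq_real, real_inner_smul_right, norm_smul, hxp, hx, norm_inv, norm_norm]
  field_simp
  nlinarith

variable [FiniteDimensional ℝ V]

lemma Submodule.sum_infDist_sq_orthonormalBasis_eq {ι κ : Type*} [Fintype ι] [Fintype κ]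
    {U₁ : Submodule ℝ V} (U₂ : Submodule ℝ V) (a : OrthonormalBasis ι ℝ U₁)
    (b : OrthonormalBasis κ ℝ U₁) :
    ∑ i, infDist (a i : V) U₂ ^ 2 = ∑ j, infDist (b j : V) U₂ ^ 2 := by
  simpa [← U₂.norm_sub_starProjection_eq_infDist] using
    (U₂ᗮ.starProjection.toLinearMap ∘ₗ U₁.subtype).sum_norm_sq_apply_orthonormalBasis_eq a b

theorem Submodule.exists_orthonormal_sq_dist_le_of_sum_infDist_sq_lt_one {r : ℕ}
    {U₁ U₂ : Submodule ℝ V} (hr : finrank ℝ U₁ = r) {u : Fin r → V} (hu : Orthonormal ℝ u)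
    (huU₁ : ∀ i, u i ∈ U₁) (hsum : ∑ i, infDist (u i) U₂ ^ 2 < 1) :
    ∃ u' v : Fin r → V, Orthonormal ℝ u' ∧ (∀ i, u' i ∈ U₁) ∧
      Orthonormal ℝ v ∧ (∀ i, v i ∈ U₂) ∧
      ∀ i, ‖u' i - v i‖ ^ 2 ≤ 2 * ∑ j, infDist (u j) U₂ ^ 2 := by
  obtain ⟨b, hb⟩ := U₁.exists_orthonormalBasis_coe_eq hu huU₁ hr
  obtain ⟨a, ha⟩ := (U₂.orthogonalProjectionOnto.toLinearMap ∘ₗ U₁.subtype)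
    |>.exists_orthonormalBasis_pairwise_inner_apply_eq_zero hr
  have ha_on : Orthonormal ℝ fun i => (a i : V) := a.orthonormal.comp_linearIsometry U₁.subtypeₗᵢ
  have hdist (i) : ‖(a i : V) - U₂.starProjection (a i)‖ ^ 2 ≤ ∑ j, infDist (u j) U₂ ^ 2 := by
    simp_rw [U₂.norm_sub_starProjection_eq_infDist, ← hb,
      sum_infDist_sq_orthonormalBasis_eq U₂ b a]
    exact Finset.single_le_sum (fun j _ => sq_nonneg (infDist (a j : V) U₂)) (Finset.mem_univ i)
  have hPa_ne (i) : U₂.starProjection (a i) ≠ 0 := by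
    intro h
    have := hdist i
    rw [h, sub_zero, ha_on.1 i] at this
    linarith
  refine ⟨fun i => a i, fun i => ‖U₂.starProjection (a i)‖⁻¹ • U₂.starProjection (a i),
    ha_on, fun i => (a i).2, orthonormal_inv_norm_smul_of_pairwise_inner_eq_zero ha hPa_ne,
    fun i => U₂.smul_mem _ (U₂.starProjection_apply_mem _), fun i => ?_⟩
  exact (U₂.norm_sub_inv_norm_smul_starProjection_sq_le (ha_on.1 i)).trans
    (by gcongr; exact hdist i)

end Projection

/-- if two `r`-dimensional subspaces `U₁, U₂` of an inner product space `V`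
are such that some orthonormal basis of `U₁` lies within `ε` of `U₂` (with `ε`
sufficiently small depending only on `dim V`), then `U₁` and `U₂` admit orthonormal
bases that are pairwise within `C·ε`, with `C` depending only on `dim V`. -/
theorem stmt5 (n : ℕ) :
    ∃ ε₀ C : ℝ, 0 < ε₀ ∧ 0 < C ∧
      ∀ (V : Type) (_ : NormedAddCommGroup V), ∀ (_ : InnerProductSpace ℝ V),
        ∀ (_ : FiniteDimensional ℝ V),
        Module.finrank ℝ V = n →
        ∀ (r : ℕ) (U₁ U₂ : Submodule ℝ V) (u : Fin r → V) (ε : ℝ),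
          0 < ε → ε ≤ ε₀ →
          Module.finrank ℝ U₁ = r → Module.finrank ℝ U₂ = r →
          Orthonormal ℝ u → (∀ i, u i ∈ U₁) →
          (∀ i, Metric.infDist (u i) (U₂ : Set V) ≤ ε) →
          ∃ u' v : Fin r → V, Orthonormal ℝ u' ∧ (∀ i, u' i ∈ U₁) ∧
            Orthonormal ℝ v ∧ (∀ i, v i ∈ U₂) ∧ ∀ i, ‖u' i - v i‖ ≤ C * ε := by
  refine ⟨1 / (n + 1), n + 1, by positivity, by positivity, ?_⟩
  intro V _ _ _ hV r U₁ U₂ u ε hε hεε₀ hr₁ _ hu huU₁ hdist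
  have hrn : (r : ℝ) ≤ n := by
    rw [← hr₁, ← hV]; exact_mod_cast U₁.finrank_le
  have hsum : ∑ i, infDist (u i) U₂ ^ 2 ≤ n * ε ^ 2 :=
    calc ∑ i, infDist (u i) U₂ ^ 2 ≤ ∑ _i : Fin r, ε ^ 2 := by
          gcongr with i
          exacts [infDist_nonneg, hdist i]
      _ = r * ε ^ 2 := by simp
      _ ≤ n * ε ^ 2 := by gcongr
  have hsmall : n * ε ^ 2 < 1 := by
    rw [le_div_iff₀ (by positivity)] at hεε₀
    nlinarith
  obtain ⟨u', v, hu', hu'U₁, hv, hvU₂, hclose⟩ :=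
    Submodule.exists_orthonormal_sq_dist_le_of_sum_infDist_sq_lt_one hr₁ hu huU₁
      (hsum.trans_lt hsmall)
  refine ⟨u', v, hu', hu'U₁, hv, hvU₂, fun i => ?_⟩
  refine (pow_le_pow_iff_left₀ (norm_nonneg _) (by positivity) two_ne_zero).mp ?_
  calc ‖u' i - v i‖ ^ 2 ≤ 2 * ∑ j, infDist (u j) U₂ ^ 2 := hclose i
    _ ≤ 2 * (n * ε ^ 2) := by gcongr
    _ ≤ ((n + 1) * ε) ^ 2 := by nlinarith
end

section
/- Let μ be a probability measure preserved by a measure-preserving flow (u_t)_{t∈ℝ} on a probability space, and let f ∈ L²(μ) with ∫ f dμ = 0. Suppose |⟨u_t f, f⟩| ≤ C·(1+|t|)^{−η} for all t, with constants C > 0 and η ∈ (0,1). Let M be an integer with M ≥ 10 + 10/η, and for T ≥ 1 set D_T(f)(x) = ((T+1)^M − T^M)^{−1} ∫_{T^M}^{(T+1)^M} f(u_t x) dt. Then ∫ |D_T(f)|² dμ ≤ C'·C·T^{−4} for a constant C' depending only on M and η. -/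
/-!
Writing `D_T(f)² = L⁻² ∫∫ f(u_s x) f(u_t x) ds dt` with `L = (T+1)^M - T^M` and integrating
in `x` (Fubini), invariance of `μ` turns the inner integral into the correlation
`⟨u_{s-t} f, f⟩`. On the near-diagonal strip `|s - t| ≤ r` it is bounded by `C`, off the strip by
`C r^{-η}`, so `∫ |D_T f|² ≤ C (2r / L + r^{-η})`. With `r = T^{M/2}` and `L ≥ T^{M-1}`,
both terms are `O(T^{-4})` once `M ≥ 10 + 10/η`.
-/

open MeasureTheory Set Function Metric

theorem MeasureTheory.MeasurePreserving.integral_comp_of_aestronglyMeasurable {Ω Ω' : Type*}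
    [MeasurableSpace Ω] [MeasurableSpace Ω'] {μ : Measure Ω} {μ' : Measure Ω'} {φ : Ω → Ω'}
    (hφ : MeasurePreserving φ μ μ') {g : Ω' → ℝ} (hg : AEStronglyMeasurable g μ') :
    ∫ x, g (φ x) ∂μ = ∫ y, g y ∂μ' := by
  rw [← hφ.map_eq] at hg ⊢
  exact (integral_map hφ.measurable.aemeasurable hg).symm

theorem integral_comp_flow_mul_comp_flow {Ω : Type*} [MeasurableSpace Ω] {μ : Measure Ω}
    {u : ℝ → Ω → Ω} (hu : ∀ t, MeasurePreserving (u t) μ μ)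
    (hflow : ∀ s t, u (s + t) = u s ∘ u t) {f g : Ω → ℝ} (s t : ℝ)
    (hfg : AEStronglyMeasurable (fun x => f (u (s - t) x) * g x) μ) :
    ∫ x, f (u s x) * g (u t x) ∂μ = ∫ x, f (u (s - t) x) * g x ∂μ := by
  rw [show u s = u (s - t) ∘ u t by rw [← hflow, sub_add_cancel]]
  exact (hu t).integral_comp_of_aestronglyMeasurable hfg

section Fubini

variable {α Ω : Type*} [MeasurableSpace α] [MeasurableSpace Ω] {ν : Measure α}
  [IsFiniteMeasure ν] {μ : Measure Ω} [SFinite μ] {F : α → Ω → ℝ} {E : ℝ}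

theorem integrable_prod_mul_of_integral_sq_le (hF : Measurable (uncurry F))
    (hF2 : ∀ t, MemLp (F t) 2 μ) (hE : ∀ t, ∫ x, F t x ^ 2 ∂μ ≤ E) :
    Integrable (fun q : (α × α) × Ω => F q.1.1 q.2 * F q.1.2 q.2) ((ν.prod ν).prod μ) := by
  have hmeas : Measurable fun q : (α × α) × Ω => F q.1.1 q.2 * F q.1.2 q.2 :=
    (hF.comp (measurable_fst.fst.prodMk measurable_snd)).mul
      (hF.comp (measurable_fst.snd.prodMk measurable_snd))
  refine (integrable_prod_iff hmeas.aestronglyMeasurable).2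
    ⟨.of_forall fun p => (hF2 p.1).integrable_mul (hF2 p.2), ?_⟩
  refine .of_bound
    (hmeas.norm.stronglyMeasurable.integral_prod_right'.aestronglyMeasurable) (2 * E)
    (.of_forall fun p => ?_)
  have hyoung : ∀ x, ‖F p.1 x * F p.2 x‖ ≤ F p.1 x ^ 2 + F p.2 x ^ 2 := fun x => by
    rw [Real.norm_eq_abs, abs_mul]
    nlinarith [sq_abs (F p.1 x), sq_abs (F p.2 x), sq_nonneg (|F p.1 x| - |F p.2 x|),
      abs_nonneg (F p.1 x), abs_nonneg (F p.2 x)]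
  rw [Real.norm_of_nonneg (integral_nonneg fun _ => norm_nonneg _)]
  calc ∫ x, ‖F p.1 x * F p.2 x‖ ∂μ ≤ ∫ x, (F p.1 x ^ 2 + F p.2 x ^ 2) ∂μ :=
        integral_mono ((hF2 p.1).integrable_mul (hF2 p.2)).norm
          ((hF2 p.1).integrable_sq.add (hF2 p.2).integrable_sq) hyoung
    _ = ∫ x, F p.1 x ^ 2 ∂μ + ∫ x, F p.2 x ^ 2 ∂μ :=
        integral_add (hF2 p.1).integrable_sq (hF2 p.2).integrable_sq
    _ ≤ 2 * E := by linarith [hE p.1, hE p.2]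

theorem integral_sq_integral_eq_integral_prod (hF : Measurable (uncurry F))
    (hF2 : ∀ t, MemLp (F t) 2 μ) (hE : ∀ t, ∫ x, F t x ^ 2 ∂μ ≤ E) :
    ∫ x, (∫ t, F t x ∂ν) ^ 2 ∂μ = ∫ p, ∫ x, F p.1 x * F p.2 x ∂μ ∂(ν.prod ν) := by
  simp_rw [sq, ← integral_prod_mul]
  exact integral_integral_swap (integrable_prod_mul_of_integral_sq_le hF hF2 hE).swap

end Fubini

theorem abs_integral_prod_le_of_near_far {α : Type*} [PseudoMetricSpace α] [MeasurableSpace α]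
    [OpensMeasurableSpace α] {ν : Measure α} [IsFiniteMeasure ν] {k : α × α → ℝ}
    (hk : Integrable k (ν.prod ν)) {r a b w : ℝ} (ha : 0 ≤ a) (hb : 0 ≤ b)
    (hw : ∀ s, ν.real (closedBall s r) ≤ w)
    (hnear : ∀ s t, dist t s ≤ r → |k (s, t)| ≤ a)
    (hfar : ∀ s t, r < dist t s → |k (s, t)| ≤ b) :
    |∫ p, k p ∂(ν.prod ν)| ≤ ν.real univ * (a * w + b * ν.real univ) := by
  have hsplit : ∀ s t, |k (s, t)| ≤ (closedBall s r).indicator (fun _ => a) t + b := by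
    intro s t
    by_cases hst : dist t s ≤ r
    · rw [indicator_of_mem (mem_closedBall.2 hst)]
      linarith [hnear s t hst]
    · rw [indicator_of_notMem (by simpa using hst)]
      linarith [hfar s t (not_le.1 hst)]
  have hinner : ∀ s, ∫ t, |k (s, t)| ∂ν ≤ a * w + b * ν.real univ := by
    intro s
    have hmaj : Integrable (fun t => (closedBall s r).indicator (fun _ => a) t + b) ν :=
      ((integrable_const a).indicator measurableSet_closedBall).add (integrable_const b)
    calc ∫ t, |k (s, t)| ∂ν
        ≤ ∫ t, ((closedBall s r).indicator (fun _ => a) t + b) ∂ν :=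
          integral_mono_of_nonneg (.of_forall fun _ => abs_nonneg _) hmaj
            (.of_forall (hsplit s))
      _ = ν.real (closedBall s r) * a + ν.real univ * b := by
          rw [integral_add ((integrable_const a).indicator measurableSet_closedBall)
            (integrable_const b), integral_indicator_const _ measurableSet_closedBall,
            integral_const, smul_eq_mul, smul_eq_mul]
      _ ≤ a * w + b * ν.real univ := by nlinarith [hw s]
  calc |∫ p, k p ∂(ν.prod ν)| ≤ ∫ p, |k p| ∂(ν.prod ν) := abs_integral_le_integral_abs
    _ = ∫ s, ∫ t, |k (s, t)| ∂ν ∂ν := integral_prod _ hk.abs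
    _ ≤ ∫ _, (a * w + b * ν.real univ) ∂ν :=
        integral_mono_of_nonneg (.of_forall fun _ => integral_nonneg fun _ => abs_nonneg _)
          (integrable_const _) (.of_forall hinner)
    _ = ν.real univ * (a * w + b * ν.real univ) := by rw [integral_const, smul_eq_mul]

theorem abs_integral_Ioc_prod_le_of_abs_le_rpow_neg {A B r C η : ℝ} (hAB : A ≤ B) (hr : 0 < r)
    (hC : 0 ≤ C) (hη : 0 ≤ η) {k : ℝ × ℝ → ℝ}
    (hk : Integrable k ((volume.restrict (Ioc A B)).prod (volume.restrict (Ioc A B))))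
    (hdecay : ∀ s t, |k (s, t)| ≤ C * (1 + |s - t|) ^ (-η)) :
    |∫ p, k p ∂((volume.restrict (Ioc A B)).prod (volume.restrict (Ioc A B)))|
      ≤ (B - A) * (C * (2 * r) + C * r ^ (-η) * (B - A)) := by
  have hdecay' : ∀ s t, |k (s, t)| ≤ C * (1 + dist t s) ^ (-η) := fun s t => by
    rw [Real.dist_eq, abs_sub_comm]; exact hdecay s t
  have hvol : (volume.restrict (Ioc A B)).real univ = B - A := by simp [hAB]
  rw [← hvol]
  refine abs_integral_prod_le_of_near_far (r := r) hk hC (by positivity) (fun s => ?_)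
    (fun s t hst => ?_) (fun s t hst => ?_)
  · rw [measureReal_restrict_apply measurableSet_closedBall, ← Real.volume_real_closedBall hr.le]
    exact measureReal_mono inter_subset_left measure_closedBall_lt_top.ne
  · refine (hdecay' s t).trans (mul_le_of_le_one_right hC ?_)
    exact Real.rpow_le_one_of_one_le_of_nonpos (by linarith [dist_nonneg (x := t) (y := s)])
      (by linarith)
  · refine (hdecay' s t).trans (mul_le_mul_of_nonneg_left ?_ hC)
    exact Real.rpow_le_rpow_of_nonpos hr (by linarith) (by linarith)

theorem mul_rpow_sub_one_le_add_one_pow_sub_pow {T : ℝ} (hT : 0 < T) (M : ℕ) :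
    M * T ^ ((M : ℝ) - 1) ≤ (T + 1) ^ M - T ^ M := by
  have hbern : 1 + M * T⁻¹ ≤ (1 + T⁻¹) ^ M :=
    one_add_mul_le_pow (by linarith [inv_pos.2 hT]) M
  have hfactor : (T + 1) ^ M = T ^ M * (1 + T⁻¹) ^ M := by
    rw [← mul_pow, mul_add, mul_one, mul_inv_cancel₀ hT.ne']
  rw [Real.rpow_sub_one hT.ne', Real.rpow_natCast, hfactor, div_eq_mul_inv]
  nlinarith [mul_le_mul_of_nonneg_left hbern (pow_pos hT M).le]

theorem two_mul_rpow_half_div_add_rpow_half_rpow_neg_le {η : ℝ} (hη : 0 < η) {M : ℕ}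
    (hM : 10 + 10 / η ≤ (M : ℝ)) {T : ℝ} (hT : 1 ≤ T) :
    2 * (T ^ ((M : ℝ) / 2) / ((T + 1) ^ M - T ^ M)) + (T ^ ((M : ℝ) / 2)) ^ (-η)
      ≤ 3 * T ^ (-(4 : ℝ)) := by
  have hT0 : 0 < T := one_pos.trans_le hT
  have hM10 : (10 : ℝ) ≤ M := by linarith [div_pos (by norm_num : (0 : ℝ) < 10) hη]
  have hηM : 10 ≤ η * M := by
    have := mul_le_mul_of_nonneg_left hM hη.le
    rw [mul_add, mul_div_cancel₀ _ hη.ne'] at this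
    linarith
  have hgap : T ^ ((M : ℝ) - 1) ≤ (T + 1) ^ M - T ^ M :=
    (le_mul_of_one_le_left (by positivity) (by linarith)).trans
      (mul_rpow_sub_one_le_add_one_pow_sub_pow hT0 M)
  have hratio : T ^ ((M : ℝ) / 2) / ((T + 1) ^ M - T ^ M) ≤ T ^ (-(4 : ℝ)) :=
    calc T ^ ((M : ℝ) / 2) / ((T + 1) ^ M - T ^ M)
        ≤ T ^ ((M : ℝ) / 2) / T ^ ((M : ℝ) - 1) := by gcongr
      _ = T ^ ((M : ℝ) / 2 - ((M : ℝ) - 1)) := (Real.rpow_sub hT0 _ _).symm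
      _ ≤ T ^ (-(4 : ℝ)) := Real.rpow_le_rpow_of_exponent_le hT (by linarith)
  have hdecay : (T ^ ((M : ℝ) / 2)) ^ (-η) ≤ T ^ (-(4 : ℝ)) := by
    rw [← Real.rpow_mul hT0.le]
    exact Real.rpow_le_rpow_of_exponent_le hT (by linarith)
  linarith

theorem stmt14_general (η : ℝ) (hη1 : 0 < η) (M : ℕ)
    (hM : 10 + 10 / η ≤ (M : ℝ)) :
    ∃ C' : ℝ, 0 < C' ∧
      ∀ (Ω : Type) (_ : MeasurableSpace Ω) (μ : Measure Ω),
        IsProbabilityMeasure μ →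
        ∀ u : ℝ → Ω → Ω, (∀ t, MeasurePreserving (u t) μ μ) →
        (∀ s t, u (s + t) = u s ∘ u t) →
        ∀ f : Ω → ℝ, MemLp f 2 μ →
        (Measurable fun p : ℝ × Ω => f (u p.1 p.2)) →
        (∫ x, f x ∂μ) = 0 →
        ∀ C : ℝ, 0 < C →
        (∀ t : ℝ, |∫ x, f (u t x) * f x ∂μ| ≤ C * (1 + |t|) ^ (-η)) →
        ∀ T : ℝ, 1 ≤ T →
          (∫ x, ((((T + 1) ^ M - T ^ M)⁻¹ * ∫ t in T ^ M..(T + 1) ^ M, f (u t x)) ^ 2) ∂μ)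
            ≤ C' * C * T ^ (-(4 : ℝ)) := by
  refine ⟨3, by norm_num, ?_⟩
  intro Ω _ μ _ u hu hflow f hf hmeas _ C hC hcorr T hT
  have hM0 : M ≠ 0 := (Nat.cast_pos.1 ((by positivity : (0 : ℝ) < 10 + 10 / η).trans_le hM)).ne'
  set L := (T + 1) ^ M - T ^ M
  have hL : 0 < L := sub_pos.2 (pow_lt_pow_left₀ (lt_add_one T) (by linarith) hM0)
  have hAB : T ^ M ≤ (T + 1) ^ M := by linarith
  set r := T ^ ((M : ℝ) / 2)
  have hF2 : ∀ t, MemLp (fun x => f (u t x)) 2 μ := fun t => hf.comp_measurePreserving (hu t)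
  have hE : ∀ t, ∫ x, f (u t x) ^ 2 ∂μ ≤ ∫ x, f x ^ 2 ∂μ := fun t =>
    ((hu t).integral_comp_of_aestronglyMeasurable (hf.1.pow 2)).le
  have hdouble := abs_integral_Ioc_prod_le_of_abs_le_rpow_neg hAB (by positivity : 0 < r)
    hC.le hη1.le (integrable_prod_mul_of_integral_sq_le hmeas hF2 hE).integral_prod_left
    fun s t => by
      rw [integral_comp_flow_mul_comp_flow hu hflow s t ((hF2 (s - t)).1.mul hf.1)]
      exact hcorr (s - t)
  calc ∫ x, (L⁻¹ * ∫ t in T ^ M..(T + 1) ^ M, f (u t x)) ^ 2 ∂μ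
      = L⁻¹ ^ 2 * ∫ p, ∫ x, f (u p.1 x) * f (u p.2 x) ∂μ
          ∂((volume.restrict (Ioc (T ^ M) ((T + 1) ^ M))).prod
            (volume.restrict (Ioc (T ^ M) ((T + 1) ^ M)))) := by
        simp_rw [mul_pow, intervalIntegral.integral_of_le hAB]
        rw [integral_const_mul, integral_sq_integral_eq_integral_prod hmeas hF2 hE]
    _ ≤ L⁻¹ ^ 2 * (L * (C * (2 * r) + C * r ^ (-η) * L)) := by
        gcongr; exact (le_abs_self _).trans hdouble
    _ = C * (2 * (r / L) + r ^ (-η)) := by field_simp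
    _ ≤ C * (3 * T ^ (-(4 : ℝ))) := by
        gcongr; exact two_mul_rpow_half_div_add_rpow_half_rpow_neg_le hη1 hM hT
    _ = 3 * C * T ^ (-(4 : ℝ)) := by ring

/-- effective mean ergodic estimate. If the flow `(u_t)` preserves the
probability measure `μ`, `f` is mean-zero in `L²(μ)` with correlation decay
`|⟨u_t f, f⟩| ≤ C(1+|t|)^{-η}`, and `M ≥ 10 + 10/η`, then the ergodic average
`D_T(f)` over `[T^M, (T+1)^M]` satisfies `∫ |D_T(f)|² dμ ≤ C'·C·T^{-4}` with `C'`
depending only on `M` and `η`. -/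
theorem stmt14 (η : ℝ) (hη1 : 0 < η) (hη2 : η < 1) (M : ℕ)
    (hM : 10 + 10 / η ≤ (M : ℝ)) :
    ∃ C' : ℝ, 0 < C' ∧
      ∀ (Ω : Type) (_ : MeasurableSpace Ω) (μ : Measure Ω),
        IsProbabilityMeasure μ →
        ∀ u : ℝ → Ω → Ω, (∀ t, MeasurePreserving (u t) μ μ) →
        (∀ s t, u (s + t) = u s ∘ u t) →
        ∀ f : Ω → ℝ, MemLp f 2 μ →
        (Measurable fun p : ℝ × Ω => f (u p.1 p.2)) →
        (∫ x, f x ∂μ) = 0 →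
        ∀ C : ℝ, 0 < C →
        (∀ t : ℝ, |∫ x, f (u t x) * f x ∂μ| ≤ C * (1 + |t|) ^ (-η)) →
        ∀ T : ℝ, 1 ≤ T →
          (∫ x, ((((T + 1) ^ M - T ^ M)⁻¹ * ∫ t in T ^ M..(T + 1) ^ M, f (u t x)) ^ 2) ∂μ)
            ≤ C' * C * T ^ (-(4 : ℝ)) :=
  stmt14_general η hη1 M hM
end
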